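/- Suppose {T_{m,n}} is a collection of linear operators T_{m,n} ∈ End(V^{⊗(m+n)}) satisfying T_{n+k,m}·(T_{k,n})^{↑m} = T_{k,m+n}·T_{n,m} for all m,n,k ≥ 0, and T_{m,0} = T_{0,m} = Id. Then the binary operation u ⊙ v := T_{n,m}(u⊗v) for u ∈ V^{⊗m}, v ∈ V^{⊗n} makes the tensor space ⊕_j V^{⊗j} into an associative graded algebra with unit 1 ∈ V^{⊗0}. -/

import Mathlib

/-- A vector space bundled with its `AddCommGroup` and `Module` instances. -/
structure ModPack (k : Type) [Field k] where
  carrier : Type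
  [ac : AddCommGroup carrier]
  [mod : Module k carrier]

attribute [instance] ModPack.ac ModPack.mod

/-- The tower of tensor powers `V^{⊗n}` (with `V^{⊗0} = k`), bundled with instances. -/
noncomputable def Wpack (k V : Type) [Field k] [AddCommGroup V] [Module k V] :
    ℕ → ModPack k
  | 0 => ⟨k⟩
  | n + 1 => ⟨TensorProduct k (Wpack k V n).carrier V⟩

/-- The tensor power `V^{⊗n}` (`W k V 0 = k`). -/
noncomputable def W (k V : Type) [Field k] [AddCommGroup V] [Module k V] (n : ℕ) : Type :=
  (Wpack k V n).carrier

noncomputable instance (k V : Type) [Field k] [AddCommGroup V] [Module k V] (n : ℕ) :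
    AddCommGroup (W k V n) := (Wpack k V n).ac

noncomputable instance (k V : Type) [Field k] [AddCommGroup V] [Module k V] (n : ℕ) :
    Module k (W k V n) := (Wpack k V n).mod

/-- The canonical identification `V^{⊗a} ⊗ V^{⊗b} ≅ V^{⊗(a+b)}`. -/
noncomputable def mulW (k V : Type) [Field k] [AddCommGroup V] [Module k V] :
    (a b : ℕ) → TensorProduct k (W k V a) (W k V b) ≃ₗ[k] W k V (a + b)
  | a, 0 => TensorProduct.rid k (W k V a)
  | a, b + 1 =>
      (TensorProduct.assoc k (W k V a) (W k V b) V).symm ≪≫ₗ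
        TensorProduct.congr (mulW k V a b) (LinearEquiv.refl k V)

/-- Transport along an equality of tensor-power degrees. -/
noncomputable def castW (k V : Type) [Field k] [AddCommGroup V] [Module k V]
    {a b : ℕ} (h : a = b) : W k V a ≃ₗ[k] W k V b := by
  subst h; exact LinearEquiv.refl k (W k V a)

/-- `X ⊗ Id^{⊗l}`: the canonical extension of `X ∈ End(V^{⊗j})` to `End(V^{⊗(j+l)})`. -/
noncomputable def extR (k V : Type) [Field k] [AddCommGroup V] [Module k V]
    (l : ℕ) {j : ℕ} (X : Module.End k (W k V j)) : Module.End k (W k V (j + l)) :=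
  (mulW k V j l).conj (TensorProduct.map X LinearMap.id)

/-- `X^{↑l} = Id^{⊗l} ⊗ X`: the shift of `X ∈ End(V^{⊗j})` into `End(V^{⊗(l+j)})`. -/
noncomputable def upL (k V : Type) [Field k] [AddCommGroup V] [Module k V]
    (l : ℕ) {j : ℕ} (X : Module.End k (W k V j)) : Module.End k (W k V (l + j)) :=
  (mulW k V l j).conj (TensorProduct.map LinearMap.id X)

/-- The product `u ⊙ v := T_{n,m}(u ⊗ v)` on `⊕_j V^{⊗j}`. -/
noncomputable def odot (k V : Type) [Field k] [AddCommGroup V] [Module k V]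
    (T : ∀ m n : ℕ, Module.End k (W k V (m + n)))
    {m n : ℕ} (u : W k V m) (v : W k V n) : W k V (m + n) :=
  castW k V (Nat.add_comm n m)
    (T n m (castW k V (Nat.add_comm m n) (mulW k V m n (u ⊗ₜ[k] v))))


section Aux
variable {k V : Type} [Field k] [AddCommGroup V] [Module k V]

lemma castW_refl {a : ℕ} (h : a = a) (x : W k V a) : castW k V h x = x := rfl

lemma castW_castW {a b c : ℕ} (h1 : a = b) (h2 : b = c) (x : W k V a) :
    castW k V h2 (castW k V h1 x) = castW k V (h1.trans h2) x := by
  subst h1 h2; rfl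

lemma castW_symm {a b : ℕ} (h : a = b) :
    (castW k V h).symm = castW k V h.symm := by subst h; rfl

lemma mulW_castL {a a' b : ℕ} (h : a = a') (h2 : a + b = a' + b) (x : W k V a) (y : W k V b) :
    mulW k V a' b (castW k V h x ⊗ₜ[k] y) = castW k V h2 (mulW k V a b (x ⊗ₜ[k] y)) := by
  subst h; rfl

lemma mulW_castR {a b b' : ℕ} (h : b = b') (h2 : a + b = a + b') (x : W k V a) (y : W k V b) :
    mulW k V a b' (x ⊗ₜ[k] castW k V h y) = castW k V h2 (mulW k V a b (x ⊗ₜ[k] y)) := by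
  subst h; rfl

lemma extR_mulW {l j : ℕ} (X : Module.End k (W k V j)) (x : W k V j) (y : W k V l) :
    extR k V l X (mulW k V j l (x ⊗ₜ[k] y)) = mulW k V j l (X x ⊗ₜ[k] y) := by
  simp [extR, LinearEquiv.conj_apply]

lemma upL_mulW {l j : ℕ} (X : Module.End k (W k V j)) (x : W k V l) (y : W k V j) :
    upL k V l X (mulW k V l j (x ⊗ₜ[k] y)) = mulW k V l j (x ⊗ₜ[k] X y) := by
  simp [upL, LinearEquiv.conj_apply]

noncomputable def tW {a : ℕ} (x : W k V a) (t : V) : W k V (a + 1) :=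
  x ⊗ₜ[k] t

lemma castW_succ {a b : ℕ} (h : a = b) (h2 : a + 1 = b + 1) (x : W k V a) (t : V) :
    castW k V h2 (tW x t) = tW (castW k V h x) t := by
  subst h; rfl

lemma mulW_succ {a b : ℕ} (x : W k V a) (y : W k V b) (t : V) :
    mulW k V a (b + 1) (x ⊗ₜ[k] tW y t) = tW (mulW k V a b (x ⊗ₜ[k] y)) t := rfl

lemma mulW_assoc : ∀ (c a b : ℕ) (x : W k V a) (y : W k V b) (z : W k V c),
    castW k V (Nat.add_assoc a b c)
        (mulW k V (a + b) c (mulW k V a b (x ⊗ₜ[k] y) ⊗ₜ[k] z))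
      = mulW k V a (b + c) (x ⊗ₜ[k] mulW k V b c (y ⊗ₜ[k] z))
  | 0, a, b, x, y, z => by
    show castW k V (rfl : a + b = a + b)
        (TensorProduct.rid k (W k V (a+b)) (mulW k V a b (x ⊗ₜ[k] y) ⊗ₜ[k] z))
      = mulW k V a b (x ⊗ₜ[k] TensorProduct.rid k (W k V b) (y ⊗ₜ[k] z))
    rw [castW_refl]
    erw [TensorProduct.rid_tmul, TensorProduct.rid_tmul]
    erw [TensorProduct.tmul_smul, map_smul]
  | (c+1), a, b, x, y, z => by
    have key : ∀ z : TensorProduct k (W k V c) V,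
        castW k V (Nat.add_assoc a b (c+1))
            (mulW k V (a + b) (c+1) (mulW k V a b (x ⊗ₜ[k] y) ⊗ₜ[k] z))
          = mulW k V a (b + (c+1)) (x ⊗ₜ[k] mulW k V b (c+1) (y ⊗ₜ[k] z)) := by
      intro z
      induction z using TensorProduct.induction_on with
      | zero => erw [TensorProduct.tmul_zero, TensorProduct.tmul_zero]; simp
      | tmul z' t =>
        show castW k V (show (a+b)+c+1 = (a+(b+c))+1 by omega)
            (mulW k V (a + b) (c+1) (mulW k V a b (x ⊗ₜ[k] y) ⊗ₜ[k] tW z' t))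
          = mulW k V a ((b+c)+1) (x ⊗ₜ[k] mulW k V b (c+1) (y ⊗ₜ[k] tW z' t))
        rw [mulW_succ, mulW_succ, mulW_succ, castW_succ (h := Nat.add_assoc a b c),
          mulW_assoc c a b x y z']
      | add z1 z2 h1 h2 =>
        erw [TensorProduct.tmul_add, TensorProduct.tmul_add]
        simp [TensorProduct.tmul_add, map_add, h1, h2]
    exact key z

end Aux
section Aux4
variable {k V : Type} [Field k] [AddCommGroup V] [Module k V]

lemma mulW_one_left : ∀ (m : ℕ) (u : W k V m),
    mulW k V 0 m ((show W k V 0 from (1 : k)) ⊗ₜ[k] u) = castW k V (Nat.zero_add m).symm u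
  | 0, u => by
    show TensorProduct.rid k (W k V 0) ((show W k V 0 from (1:k)) ⊗ₜ[k] u)
        = castW k V (rfl : 0 = 0) u
    rw [castW_refl]
    erw [TensorProduct.rid_tmul]
    show (show k from u) * (1:k) = u
    exact mul_one _
  | (m+1), u => by
    have key : ∀ u : TensorProduct k (W k V m) V,
        mulW k V 0 (m+1) ((show W k V 0 from (1 : k)) ⊗ₜ[k] u)
          = castW k V (Nat.zero_add (m+1)).symm u := by
      intro u
      induction u using TensorProduct.induction_on with
      | zero =>
        erw [TensorProduct.tmul_zero]; simp
        exact (map_zero (castW k V (Nat.zero_add (m+1)).symm)).symm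
      | tmul u' t =>
        show mulW k V 0 (m+1) ((show W k V 0 from (1 : k)) ⊗ₜ[k] tW u' t)
          = castW k V (show m+1 = 0+m+1 by omega) (tW u' t)
        rw [mulW_succ, castW_succ (h := (Nat.zero_add m).symm), mulW_one_left m u']
      | add u1 u2 h1 h2 => erw [TensorProduct.tmul_add, map_add, h1, h2, map_add]
    exact key u

end Aux4
section Aux5
variable {k V : Type} [Field k] [AddCommGroup V] [Module k V]

lemma eq_castW_symm {a b : ℕ} (h : a = b) (x : W k V a) (y : W k V b) :
    castW k V h x = y ↔ x = castW k V h.symm y := by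
  subst h; exact Iff.rfl

end Aux5

/-- if the collection `T_{m,n} ∈ End(V^{⊗(m+n)})` satisfies
`T_{n+p,m}·(T_{p,n})^{↑m} = T_{p,m+n}·T_{n,m}` (for all `m,n,p ≥ 0`) and
`T_{m,0} = T_{0,m} = Id`, then `u ⊙ v := T_{n,m}(u ⊗ v)` makes `⊕_j V^{⊗j}` a graded
associative algebra with unit `1 ∈ k = V^{⊗0}`. -/
theorem stmt_14 {k V : Type} [Field k] [AddCommGroup V] [Module k V]
    (T : ∀ m n : ℕ, Module.End k (W k V (m + n)))
    (hTr : ∀ m : ℕ, T m 0 = LinearMap.id)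
    (hTl : ∀ m : ℕ, T 0 m = LinearMap.id)
    (hT : ∀ m n p : ℕ,
      (castW k V (show n + p + m = m + n + p by omega)).conj (T (n + p) m) ∘ₗ
          (castW k V (show m + (p + n) = m + n + p by omega)).conj (upL k V m (T p n)) =
        (castW k V (show p + (m + n) = m + n + p by omega)).conj (T p (m + n)) ∘ₗ
          (castW k V (show n + m + p = m + n + p by omega)).conj (extR k V p (T n m))) :
    (∀ (m n p : ℕ) (u : W k V m) (v : W k V n) (w : W k V p),
        castW k V (show m + n + p = m + (n + p) by omega)
            (odot k V T (odot k V T u v) w) =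
          odot k V T u (odot k V T v w)) ∧
      (∀ (m : ℕ) (u : W k V m), odot k V T u (show W k V 0 from (1 : k)) = u) ∧
      (∀ (m : ℕ) (u : W k V m),
        castW k V (Nat.zero_add m) (odot k V T (show W k V 0 from (1 : k)) u) = u) := by
  refine ⟨?_, ?_, ?_⟩
  · -- associativity
    intro m n p u v w
    simp only [odot]
    rw [mulW_castL (Nat.add_comm n m) (show n+m+p = m+n+p by omega),
      ← extR_mulW (T n m) (castW k V (Nat.add_comm m n) (mulW k V m n (u ⊗ₜ[k] v))) w,
      mulW_castL (Nat.add_comm m n) (show m+n+p = n+m+p by omega) (mulW k V m n (u ⊗ₜ[k] v)) w]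
    have hE := mulW_assoc p m n u v w
    rw [eq_castW_symm] at hE
    rw [hE]
    rw [mulW_castR (Nat.add_comm p n) (show m+(p+n) = m+(n+p) by omega),
      ← upL_mulW (T p n) u (castW k V (Nat.add_comm n p) (mulW k V n p (v ⊗ₜ[k] w))),
      mulW_castR (Nat.add_comm n p) (show m+(n+p) = m+(p+n) by omega) u (mulW k V n p (v ⊗ₜ[k] w))]
    have key := congrArg (castW k V (show m+n+p = m+(n+p) by omega))
      (LinearMap.congr_fun (hT m n p)
        (castW k V (show m+(n+p) = m+n+p by omega)
          (mulW k V m (n+p) (u ⊗ₜ[k] mulW k V n p (v ⊗ₜ[k] w)))))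
    simp only [LinearMap.comp_apply, LinearEquiv.conj_apply, LinearEquiv.coe_coe,
      castW_symm, castW_castW] at key ⊢
    exact key.symm
  · -- right unit
    intro m u
    simp only [odot]
    have h1 : mulW k V m 0 (u ⊗ₜ[k] (show W k V 0 from (1:k))) = u := by
      show TensorProduct.rid k (W k V m) (u ⊗ₜ[k] (show W k V 0 from (1:k))) = u
      rw [TensorProduct.rid_tmul]; exact one_smul k u
    rw [h1, hTl m]
    simp only [LinearMap.id_coe, id_eq]
    rw [castW_castW]
    exact castW_refl _ _
  · -- left unit
    intro m u
    simp only [odot]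
    rw [mulW_one_left m u, hTr m]
    simp only [LinearMap.id_coe, id_eq]
    rw [castW_castW, castW_castW, castW_castW]
    exact castW_refl _ _
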